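/- arXiv:1305.6971 — 8 statements merged into one kernel-verified Lean document; each statement's English description precedes it below -/
import Mathlib

section
/- Let P, O: [0,d] → ℝ be twice differentiable, increasing, strictly concave functions and q ≥ 0. Define z*(x) = min(x, z_max) where z_max maximizes z ↦ O(z) - qz on [0,d], and define the latency-free utility v(x) = P(d - x) - (d - x)q + O(z*(x)) - z*(x)q for x ∈ [0,d]. Then the cost of shifting c(x) = max_{y∈[0,d]} v(y) - v(x) is nonnegative, differentiable and strictly convex on [0,d]. -/
/-!
Write `F z = O z - q z` (concave) so that `v x = P (d - x) + (q x - d q) + F (min x zmax)`.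
The first summand is strictly concave. The second is concave because a concave function is
nondecreasing to the left of its maximiser, and it is differentiable because at an interior
maximiser `F' zmax = 0`, so capping the argument at `zmax` creates no kink. Hence
`c = sup v - v` is strictly convex and differentiable, and `c ≥ 0` because `v` is continuous on
the compact interval `[0, d]`.
-/

open Set Topology

theorem image_min_const_eq_inter_Iic {α : Type*} [LinearOrder α] {s : Set α} {m : α}
    (hm : m ∈ s) : (fun x => min x m) '' s = s ∩ Iic m := by
  ext y
  constructor
  · rintro ⟨x, hx, rfl⟩
    exact ⟨min_rec' (· ∈ s) hx hm, min_le_right x m⟩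
  · rintro ⟨hy, hym⟩
    exact ⟨y, hy, min_eq_left hym⟩

section Concavity

variable {𝕜 β : Type*} [Field 𝕜] [LinearOrder 𝕜] [IsStrictOrderedRing 𝕜] [AddCommGroup β]
  [LinearOrder β] [IsOrderedAddMonoid β] [Module 𝕜 β] [IsStrictOrderedModule 𝕜 β]
  {s : Set 𝕜} {f : 𝕜 → β} {m : 𝕜}

theorem ConcaveOn.monotoneOn_inter_Iic_of_isMaxOn (hf : ConcaveOn 𝕜 s f) (hm : m ∈ s)
    (hmax : IsMaxOn f s m) : MonotoneOn f (s ∩ Iic m) := fun x hx _ hy hxy => by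
  simpa [min_eq_left (hmax hx.1)] using hf.min_le_of_mem_Icc hx.1 hm ⟨hxy, hy.2⟩

theorem ConcaveOn.comp_min_of_isMaxOn (hf : ConcaveOn 𝕜 s f) (hm : m ∈ s)
    (hmax : IsMaxOn f s m) : ConcaveOn 𝕜 s fun x => f (min x m) := by
  have hmin : ConcaveOn 𝕜 s fun x => min x m := (concaveOn_id hf.1).inf (concaveOn_const m hf.1)
  have hcap := image_min_const_eq_inter_Iic hm
  refine ConcaveOn.comp (g := f) ?_ hmin ?_
  · rw [hcap]
    exact hf.subset inter_subset_left (hf.1.inter (convex_Iic m))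
  · rw [hcap]
    exact hf.monotoneOn_inter_Iic_of_isMaxOn hm hmax

end Concavity

theorem StrictConcaveOn.comp_const_sub {E β 𝕜 : Type*} [Ring 𝕜] [PartialOrder 𝕜]
    [AddCommGroup E] [Module 𝕜 E] [AddCommMonoid β] [PartialOrder β] [SMul 𝕜 β]
    {s : Set E} {f : E → β} (hf : StrictConcaveOn 𝕜 s f) (d : E) :
    StrictConcaveOn 𝕜 ((d - ·) ⁻¹' s) fun x => f (d - x) := by
  have hcomb {x y : E} {a b : 𝕜} (hab : a + b = 1) :
      d - (a • x + b • y) = a • (d - x) + b • (d - y) := by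
    rw [smul_sub, smul_sub, sub_add_sub_comm, Convex.combo_self hab]
  refine ⟨fun x hx y hy a b ha hb hab => ?_, fun x hx y hy hxy a b ha hb hab => ?_⟩
  · simpa only [mem_preimage, hcomb hab] using hf.1 hx hy ha hb hab
  · simpa only [hcomb hab] using hf.2 hx hy (fun h => hxy (sub_right_injective h)) ha hb hab

theorem hasDerivAt_comp_min_of_hasDerivAt_zero {f : ℝ → ℝ} {m : ℝ} (hf : HasDerivAt f 0 m) :
    HasDerivAt (fun x => f (min x m)) 0 m := by
  have hleft : HasDerivWithinAt (fun x => f (min x m)) 0 (Iic m) m :=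
    hf.hasDerivWithinAt.congr (fun x hx => by rw [min_eq_left hx]) (by rw [min_self])
  have hright : HasDerivWithinAt (fun x => f (min x m)) 0 (Ici m) m :=
    (hasDerivWithinAt_const m (Ici m) (f m)).congr (fun x hx => by rw [min_eq_right hx])
      (by rw [min_self])
  simpa only [Iic_union_Ici, hasDerivWithinAt_univ] using hleft.union hright

theorem DifferentiableOn.comp_min_of_isMaxOn {f : ℝ → ℝ} {a b m : ℝ}
    (hf : DifferentiableOn ℝ f (Icc a b)) (hm : m ∈ Icc a b) (hmax : IsMaxOn f (Icc a b) m) :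
    DifferentiableOn ℝ (fun x => f (min x m)) (Icc a b) := by
  intro x hx
  rcases lt_trichotomy x m with hxm | rfl | hmx
  · refine (hf x hx).congr_of_eventuallyEq ?_ (by rw [min_eq_left hxm.le])
    filter_upwards [nhdsWithin_le_nhds (Iio_mem_nhds hxm)] with y hy
    rw [min_eq_left (le_of_lt hy)]
  · rcases hm.2.eq_or_lt with rfl | hxb
    · exact (hf x hx).congr (fun y hy => by rw [min_eq_left hy.2]) (by rw [min_self])
    rcases hm.1.eq_or_lt with rfl | hax
    · exact (differentiableWithinAt_const _).congr (fun y hy => by rw [min_eq_right hy.1])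
        (by rw [min_self])
    have hnhds : Icc a b ∈ 𝓝 x := Icc_mem_nhds hax hxb
    have hderiv := ((hf x hx).differentiableAt hnhds).hasDerivAt
    rw [(hmax.isLocalMax hnhds).hasDerivAt_eq_zero hderiv] at hderiv
    exact (hasDerivAt_comp_min_of_hasDerivAt_zero hderiv).differentiableAt.differentiableWithinAt
  · refine (differentiableWithinAt_const (f m)).congr_of_eventuallyEq ?_
      (by rw [min_eq_right hmx.le])
    filter_upwards [nhdsWithin_le_nhds (Ioi_mem_nhds hmx)] with y hy
    rw [min_eq_right (le_of_lt hy)]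

theorem stmt_1_general (d q : ℝ)
    (P O : ℝ → ℝ)
    (hP1 : DifferentiableOn ℝ P (Icc 0 d))
    (hPconc : StrictConcaveOn ℝ (Icc 0 d) P)
    (hO1 : DifferentiableOn ℝ O (Icc 0 d))
    (hOconc : StrictConcaveOn ℝ (Icc 0 d) O)
    (zmax : ℝ) (hzmax1 : zmax ∈ Icc (0:ℝ) d)
    (hzmax2 : IsMaxOn (fun z => O z - q * z) (Icc 0 d) zmax)
    (zstar v c : ℝ → ℝ)
    (hzstar : ∀ x, zstar x = min x zmax)
    (hv : ∀ x, v x = P (d - x) - (d - x) * q + O (zstar x) - zstar x * q)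
    (hc : ∀ x, c x = sSup (v '' Icc 0 d) - v x) :
    (∀ x ∈ Icc (0:ℝ) d, 0 ≤ c x) ∧
      DifferentiableOn ℝ c (Icc 0 d) ∧
      StrictConvexOn ℝ (Icc 0 d) c := by
  set F : ℝ → ℝ := fun z => O z - q * z
  have hv_split : v = fun x => (P (d - x) + (q * x - d * q)) + F (min x zmax) := by
    funext x; rw [hv, hzstar]; ring
  have hreflect : (d - ·) ⁻¹' Icc 0 d = Icc 0 d := by
    rw [preimage_const_sub_Icc, sub_self, sub_zero]
  have hv_diff : DifferentiableOn ℝ v (Icc 0 d) := by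
    rw [hv_split]
    refine DifferentiableOn.add ?_ ?_
    · exact (hP1.comp (by fun_prop) hreflect.ge).add (by fun_prop)
    · exact (hO1.sub (by fun_prop)).comp_min_of_isMaxOn hzmax1 hzmax2
  have hv_conc : StrictConcaveOn ℝ (Icc 0 d) v := by
    have hF : ConcaveOn ℝ (Icc 0 d) F :=
      hOconc.concaveOn.sub ((LinearMap.mulLeft ℝ q).convexOn (convex_Icc 0 d))
    have hP_reflect : StrictConcaveOn ℝ (Icc 0 d) fun x => P (d - x) :=
      hreflect ▸ hPconc.comp_const_sub d
    have haffine : ConcaveOn ℝ (Icc 0 d) fun x => q * x - d * q :=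
      ((LinearMap.mulLeft ℝ q).concaveOn (convex_Icc 0 d)).sub (convexOn_const _ (convex_Icc 0 d))
    rw [hv_split]
    exact (hP_reflect.add_concaveOn haffine).add_concaveOn (hF.comp_min_of_isMaxOn hzmax1 hzmax2)
  have hc_eq : c = fun x => sSup (v '' Icc 0 d) - v x := funext hc
  refine ⟨fun x hx => ?_, ?_, ?_⟩
  · rw [hc, sub_nonneg]
    exact le_csSup (isCompact_Icc.bddAbove_image hv_diff.continuousOn) (mem_image_of_mem v hx)
  · rw [hc_eq]
    exact (differentiableOn_const _).sub hv_diff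
  · rw [hc_eq]
    exact (convexOn_const _ (convex_Icc 0 d)).sub_strictConcaveOn hv_conc

/-- with `P, O` twice differentiable increasing strictly concave on `[0,d]`,
`q ≥ 0`, `z*(x) = min x z_max` where `z_max` maximizes `z ↦ O z - q z` on `[0,d]`,
`v(x) = P(d-x) - (d-x)q + O(z*(x)) - z*(x)q` and `c(x) = max v - v(x)`, the cost of
shifting `c` is nonnegative, differentiable and strictly convex on `[0,d]`. -/
theorem stmt_1 (d q : ℝ) (hd : 0 < d) (hq : 0 ≤ q)
    (P O : ℝ → ℝ)
    (hP1 : DifferentiableOn ℝ P (Icc 0 d))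
    (hP2 : DifferentiableOn ℝ (deriv P) (Icc 0 d))
    (hPmono : StrictMonoOn P (Icc 0 d))
    (hPconc : StrictConcaveOn ℝ (Icc 0 d) P)
    (hO1 : DifferentiableOn ℝ O (Icc 0 d))
    (hO2 : DifferentiableOn ℝ (deriv O) (Icc 0 d))
    (hOmono : StrictMonoOn O (Icc 0 d))
    (hOconc : StrictConcaveOn ℝ (Icc 0 d) O)
    (zmax : ℝ) (hzmax1 : zmax ∈ Icc (0:ℝ) d)
    (hzmax2 : IsMaxOn (fun z => O z - q * z) (Icc 0 d) zmax)
    (zstar v c : ℝ → ℝ)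
    (hzstar : ∀ x, zstar x = min x zmax)
    (hv : ∀ x, v x = P (d - x) - (d - x) * q + O (zstar x) - zstar x * q)
    (hc : ∀ x, c x = sSup (v '' Icc 0 d) - v x) :
    (∀ x ∈ Icc (0:ℝ) d, 0 ≤ c x) ∧
      DifferentiableOn ℝ c (Icc 0 d) ∧
      StrictConvexOn ℝ (Icc 0 d) c :=
  stmt_1_general d q P O hP1 hPconc hO1 hOconc zmax hzmax1 hzmax2 zstar v c hzstar hv hc
end

section
/- Fixed-budget rebate equilibrium existence and uniqueness: Let (Θ, F, μ) be a finite measure space, d > 0, D = d·μ(Θ). Let h: [0,D] → ℝ be continuous and increasing, and for each θ let c_θ: [0,d] → ℝ be differentiable with c'_θ continuous and strictly increasing, with sup_θ c'_θ(d) < ∞ and the map (θ, m) ↦ best response measurable. Fix R ≥ 0 and define for G > 0 the per-type best response x_θ(G) = clamp of (c'_θ)⁻¹(R/G - h(G)) to [0,d] (i.e., x_θ(G)=0 if R/G - h(G) ≤ c'_θ(0), x_θ(G)=d if R/G - h(G) ≥ c'_θ(d), else the inverse value). Then the map G ↦ ∫_Θ x_θ(G) dμ(θ) is continuous and nonincreasing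 on (0,D], and the fixed-point equation ∫_Θ x_θ(G) dμ(θ) = G has at most one solution in (0,D]. -/
open Set MeasureTheory

lemma clamp_inv_exists (f : ℝ → ℝ) (d : ℝ) (hd : 0 < d)
    (hf : ContinuousOn f (Icc 0 d)) (hm : StrictMonoOn f (Icc 0 d)) :
    ∃ Φ : ℝ → ℝ, Continuous Φ ∧ ∀ t, Φ t ∈ Icc 0 d ∧
      f (Φ t) = max (f 0) (min (f d) t) := by
  have h0d : (0:ℝ) ∈ Icc 0 d := ⟨le_refl _, hd.le⟩
  have hdd : d ∈ Icc 0 d := ⟨hd.le, le_refl _⟩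
  have hfd : f 0 ≤ f d := (hm h0d hdd hd).le
  have hmem : ∀ z : Icc (0:ℝ) d, f z ∈ Icc (f 0) (f d) := fun z =>
    ⟨hm.monotoneOn h0d z.2 z.2.1, hm.monotoneOn z.2 hdd z.2.2⟩
  set e : Icc (0:ℝ) d → Icc (f 0) (f d) := fun z => ⟨f z, hmem z⟩ with he
  have hecont : Continuous e := (hf.restrict).subtype_mk _
  have hbij : Function.Bijective e := by
    constructor
    · intro a b hab
      exact Subtype.ext (hm.injOn a.2 b.2 (congrArg Subtype.val hab))
    · intro w
      obtain ⟨z, hz, hfz⟩ := intermediate_value_Icc hd.le hf w.2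
      exact ⟨⟨z, hz⟩, Subtype.ext hfz⟩
  haveI : CompactSpace (Icc (0:ℝ) d) := isCompact_iff_compactSpace.mp isCompact_Icc
  have hcont' : Continuous ⇑(Equiv.ofBijective e hbij) := hecont
  set H : Icc (0:ℝ) d ≃ₜ Icc (f 0) (f d) := hcont'.homeoOfEquivCompactToT2 with hH
  have hclamp : ∀ t : ℝ, max (f 0) (min (f d) t) ∈ Icc (f 0) (f d) :=
    fun t => ⟨le_max_left _ _, max_le hfd (min_le_left _ _)⟩
  refine ⟨fun t => (H.symm ⟨max (f 0) (min (f d) t), hclamp t⟩ : Icc (0:ℝ) d).1,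
    ?_, fun t => ⟨(H.symm _).2, ?_⟩⟩
  · exact continuous_subtype_val.comp (H.symm.continuous.comp
      ((continuous_const.max (continuous_const.min continuous_id)).subtype_mk _))
  · have : H (H.symm ⟨max (f 0) (min (f d) t), hclamp t⟩) =
        ⟨max (f 0) (min (f d) t), hclamp t⟩ := H.apply_symm_apply _
    exact congrArg Subtype.val this

/-- fixed-budget rebate equilibrium. With `h` continuous and increasing,
per-type costs `c θ` with continuous strictly increasing derivative, uniformly bounded
marginal cost, reward parameter `R ≥ 0`, and per-type best response `x θ G` being the
clamp of `(c'_θ)⁻¹(R/G - h G)` to `[0,d]`, the aggregate best response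
`G ↦ ∫ x θ G dμ` is continuous and nonincreasing on `(0,D]`, and the fixed-point
equation `∫ x θ G dμ = G` has at most one solution in `(0,D]`. -/
theorem stmt_6 {Θ : Type*} [MeasurableSpace Θ] (μ : Measure Θ) [IsFiniteMeasure μ]
    (d D : ℝ) (hd : 0 < d) (hD : D = d * (μ Set.univ).toReal)
    (h : ℝ → ℝ)
    (hhcont : ContinuousOn h (Icc 0 D)) (hhmono : StrictMonoOn h (Icc 0 D))
    (c : Θ → ℝ → ℝ)
    (hcdiff : ∀ θ, DifferentiableOn ℝ (c θ) (Icc 0 d))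
    (hc'cont : ∀ θ, ContinuousOn (deriv (c θ)) (Icc 0 d))
    (hc'mono : ∀ θ, StrictMonoOn (deriv (c θ)) (Icc 0 d))
    (Cb : ℝ) (hCb : ∀ θ, deriv (c θ) d ≤ Cb)
    (R : ℝ) (hR : 0 ≤ R)
    (x : Θ → ℝ → ℝ)
    (hxmeas : ∀ G, Measurable fun θ => x θ G)
    (hx : ∀ θ, ∀ G ∈ Ioc (0:ℝ) D,
      (R / G - h G ≤ deriv (c θ) 0 → x θ G = 0) ∧
      (deriv (c θ) d ≤ R / G - h G → x θ G = d) ∧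
      (deriv (c θ) 0 < R / G - h G → R / G - h G < deriv (c θ) d →
        x θ G ∈ Ioo 0 d ∧ deriv (c θ) (x θ G) = R / G - h G)) :
    ContinuousOn (fun G => ∫ θ, x θ G ∂μ) (Ioc 0 D) ∧
      AntitoneOn (fun G => ∫ θ, x θ G ∂μ) (Ioc 0 D) ∧
      ∀ G₁ ∈ Ioc (0:ℝ) D, ∀ G₂ ∈ Ioc (0:ℝ) D,
        (∫ θ, x θ G₁ ∂μ) = G₁ → (∫ θ, x θ G₂ ∂μ) = G₂ → G₁ = G₂ := by
  have h0d : (0:ℝ) ∈ Icc 0 d := ⟨le_refl _, hd.le⟩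
  have hdd : d ∈ Icc 0 d := ⟨hd.le, le_refl _⟩
  set ψ : ℝ → ℝ := fun G => R / G - h G with hψ
  choose Φ hΦc hΦ using fun θ =>
    clamp_inv_exists (deriv (c θ)) d hd (hc'cont θ) (hc'mono θ)
  have hy0d : ∀ θ, deriv (c θ) 0 < deriv (c θ) d := fun θ => hc'mono θ h0d hdd hd
  -- key identity: x θ G = Φ θ (ψ G) on (0, D]
  have key : ∀ θ, ∀ G ∈ Ioc (0:ℝ) D, x θ G = Φ θ (ψ G) := by
    intro θ G hG
    obtain ⟨hΦmem, hΦeq⟩ := hΦ θ (ψ G)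
    have hinj := (hc'mono θ).injOn
    rcases le_or_gt (ψ G) (deriv (c θ) 0) with h1 | h1
    · rw [(hx θ G hG).1 h1]
      refine hinj h0d hΦmem ?_
      rw [hΦeq, min_eq_right (h1.trans (hy0d θ).le), max_eq_left h1]
    · rcases le_or_gt (deriv (c θ) d) (ψ G) with h2 | h2
      · rw [(hx θ G hG).2.1 h2]
        refine hinj hdd hΦmem ?_
        rw [hΦeq, min_eq_left h2, max_eq_right (hy0d θ).le]
      · obtain ⟨hIoo, heq⟩ := (hx θ G hG).2.2 h1 h2
        refine hinj ⟨hIoo.1.le, hIoo.2.le⟩ hΦmem ?_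
        rw [hΦeq, min_eq_right h2.le, max_eq_right h1.le, heq]
  have hmemx : ∀ θ, ∀ G ∈ Ioc (0:ℝ) D, x θ G ∈ Icc 0 d := by
    intro θ G hG; rw [key θ G hG]; exact (hΦ θ _).1
  -- integrability
  have hint : ∀ G ∈ Ioc (0:ℝ) D, Integrable (fun θ => x θ G) μ := by
    intro G hG
    refine ⟨(hxmeas G).aestronglyMeasurable, ?_⟩
    refine HasFiniteIntegral.of_bounded (C := d) (Filter.Eventually.of_forall fun θ => ?_)
    have := hmemx θ G hG
    rw [Real.norm_eq_abs, abs_le]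
    exact ⟨by linarith [this.1], this.2⟩
  -- ψ is antitone on (0, D]
  have hψanti : ∀ G₁ ∈ Ioc (0:ℝ) D, ∀ G₂ ∈ Ioc (0:ℝ) D, G₁ ≤ G₂ → ψ G₂ ≤ ψ G₁ := by
    intro G₁ h1 G₂ h2 hle
    have hdiv : R / G₂ ≤ R / G₁ := by gcongr; exact h1.1
    have hh : h G₁ ≤ h G₂ :=
      hhmono.monotoneOn ⟨h1.1.le, h1.2⟩ ⟨h2.1.le, h2.2⟩ hle
    exact sub_le_sub hdiv hh
  -- Φ is monotone
  have hΦmono : ∀ θ, Monotone (Φ θ) := by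
    intro θ t₁ t₂ hle
    by_contra hlt
    push_neg at hlt
    have := hc'mono θ (hΦ θ t₂).1 (hΦ θ t₁).1 hlt
    rw [(hΦ θ t₁).2, (hΦ θ t₂).2] at this
    have hcl : max (deriv (c θ) 0) (min (deriv (c θ) d) t₁) ≤
        max (deriv (c θ) 0) (min (deriv (c θ) d) t₂) :=
      max_le_max le_rfl (min_le_min le_rfl hle)
    linarith
  -- per-type antitonicity
  have hxanti : ∀ θ, ∀ G₁ ∈ Ioc (0:ℝ) D, ∀ G₂ ∈ Ioc (0:ℝ) D, G₁ ≤ G₂ →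
      x θ G₂ ≤ x θ G₁ := by
    intro θ G₁ h1 G₂ h2 hle
    rw [key θ G₁ h1, key θ G₂ h2]
    exact hΦmono θ (hψanti G₁ h1 G₂ h2 hle)
  have hanti : AntitoneOn (fun G => ∫ θ, x θ G ∂μ) (Ioc 0 D) := by
    intro G₁ h1 G₂ h2 hle
    exact integral_mono (hint G₂ h2) (hint G₁ h1) fun θ => hxanti θ G₁ h1 G₂ h2 hle
  refine ⟨?_, hanti, ?_⟩
  · -- continuity via dominated convergence
    intro G₀ hG₀
    apply continuousWithinAt_of_dominated (bound := fun _ => d)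
    · exact Filter.Eventually.of_forall fun G => (hxmeas G).aestronglyMeasurable
    · refine eventually_mem_nhdsWithin.mono fun G hG => ?_
      refine Filter.Eventually.of_forall fun θ => ?_
      have := hmemx θ G hG
      rw [Real.norm_eq_abs, abs_le]
      exact ⟨by linarith [this.1], this.2⟩
    · exact integrable_const d
    · refine Filter.Eventually.of_forall fun θ => ?_
      have hψc : ContinuousWithinAt ψ (Ioc 0 D) G₀ :=
        ((continuousOn_const.div continuousOn_id fun G hG => ne_of_gt hG.1).sub
          (hhcont.mono Ioc_subset_Icc_self)) G₀ hG₀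
      have hcomp : ContinuousWithinAt (fun G => Φ θ (ψ G)) (Ioc 0 D) G₀ :=
        (hΦc θ).continuousAt.comp_continuousWithinAt hψc
      exact hcomp.congr (fun G hG => key θ G hG) (key θ G₀ hG₀)
  · -- uniqueness
    intro G₁ h1 G₂ h2 e1 e2
    rcases le_total G₁ G₂ with hle | hle
    · have := hanti h1 h2 hle
      simp only [e1, e2] at this
      linarith
    · have := hanti h2 h1 hle
      simp only [e1, e2] at this
      linarith
end

section
/- Time-of-day pricing equilibrium existence and uniqueness: Under the same measure-theoretic and regularity assumptions as in the fixed-budget case, but with constant unit reward r ≥ 0 — i.e., x_θ(G) is the clamp of (c'_θ)⁻¹(r - h(G)) to [0,d] — the fixed-point equation ∫_Θ x_θ(G) dμ(θ) = G has exactly one solution G ∈ [0,D]. -/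
/-!
For every type `θ`, the best response `x θ G` is the point where the strictly increasing
marginal cost `c'_θ` crosses the level `r - h G` on `[0, d]`. Such a crossing point moves
continuously and monotonically with the level, and the level decreases in `G`, so the
aggregate `G ↦ ∫ x θ G dμ` is continuous (dominated convergence, with bound `d`) and
nonincreasing. It is `≥ 0` at `G = 0` and `≤ D` at `G = D`, so it meets the strictly
increasing identity exactly once on `[0, D]`.
-/

open Set MeasureTheory Filter Topology

/-- For `f` strictly increasing on an interval `s`, the level-`p` crossing is the clamp of
`f⁻¹ p` to `s`. -/
def IsLevelCrossing (f : ℝ → ℝ) (s : Set ℝ) (p y : ℝ) : Prop :=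
  y ∈ s ∧ (∀ z ∈ s, z < y → f z < p) ∧ (∀ z ∈ s, y < z → p < f z)

namespace IsLevelCrossing

variable {f : ℝ → ℝ} {s : Set ℝ} {p y : ℝ}

theorem of_clamp {a b : ℝ} (hab : a ≤ b) (hf : StrictMonoOn f (Icc a b))
    (hlow : p ≤ f a → y = a) (hhigh : f b ≤ p → y = b)
    (hmid : f a < p → p < f b → y ∈ Ioo a b ∧ f y = p) :
    IsLevelCrossing f (Icc a b) p y := by
  have ha : a ∈ Icc a b := left_mem_Icc.2 hab
  have hb : b ∈ Icc a b := right_mem_Icc.2 hab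
  rcases le_or_gt p (f a) with hpa | hpa
  · obtain rfl := hlow hpa
    exact ⟨ha, fun z hz hzy => absurd hz.1 hzy.not_ge,
      fun z hz hyz => hpa.trans_lt (hf ha hz hyz)⟩
  rcases le_or_gt (f b) p with hpb | hpb
  · obtain rfl := hhigh hpb
    exact ⟨hb, fun z hz hzy => (hf hz hb hzy).trans_le hpb,
      fun z hz hyz => absurd hz.2 hyz.not_ge⟩
  obtain ⟨hy, rfl⟩ := hmid hpa hpb
  have hy' : y ∈ Icc a b := Ioo_subset_Icc_self hy
  exact ⟨hy', fun z hz hzy => hf hz hy' hzy, fun z hz hyz => hf hy' hz hyz⟩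

theorem le_of_le (hs : s.OrdConnected) {p₁ p₂ y₁ y₂ : ℝ}
    (h₁ : IsLevelCrossing f s p₁ y₁) (h₂ : IsLevelCrossing f s p₂ y₂) (hp : p₁ ≤ p₂) :
    y₁ ≤ y₂ := by
  by_contra! hlt
  obtain ⟨z, hz₂, hz₁⟩ := exists_between hlt
  have hz : z ∈ s := hs.out h₂.1 h₁.1 ⟨hz₂.le, hz₁.le⟩
  linarith [h₁.2.1 z hz hz₁, h₂.2.2 z hz hz₂]

theorem eventually_lt_add (hs : s.OrdConnected) (hy : IsLevelCrossing f s p y)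
    {ε : ℝ} (hε : 0 < ε) :
    ∀ᶠ p' in 𝓝 p, ∀ y', IsLevelCrossing f s p' y' → y' < y + ε := by
  by_cases hz : y + ε / 2 ∈ s
  · filter_upwards [eventually_lt_nhds (hy.2.2 _ hz (by linarith))] with p' hp' y' hy'
    by_contra! hle
    exact (hy'.2.1 _ hz (by linarith)).not_gt hp'
  · refine Eventually.of_forall fun p' y' hy' => ?_
    by_contra! hle
    exact hz (hs.out hy.1 hy'.1 ⟨by linarith, by linarith⟩)

theorem eventually_sub_lt (hs : s.OrdConnected) (hy : IsLevelCrossing f s p y)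
    {ε : ℝ} (hε : 0 < ε) :
    ∀ᶠ p' in 𝓝 p, ∀ y', IsLevelCrossing f s p' y' → y - ε < y' := by
  by_cases hz : y - ε / 2 ∈ s
  · filter_upwards [eventually_gt_nhds (hy.2.1 _ hz (by linarith))] with p' hp' y' hy'
    by_contra! hle
    exact (hy'.2.2 _ hz (by linarith)).not_gt hp'
  · refine Eventually.of_forall fun p' y' hy' => ?_
    by_contra! hle
    exact hz (hs.out hy'.1 hy.1 ⟨by linarith, by linarith⟩)

end IsLevelCrossing

theorem continuousOn_of_isLevelCrossing {X : Type*} [TopologicalSpace X] {T : Set X}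
    {f : ℝ → ℝ} {s : Set ℝ} {g y : X → ℝ} (hs : s.OrdConnected) (hg : ContinuousOn g T)
    (hy : ∀ t ∈ T, IsLevelCrossing f s (g t) (y t)) : ContinuousOn y T := by
  intro t ht
  rw [ContinuousWithinAt, Metric.tendsto_nhds]
  intro ε hε
  filter_upwards [self_mem_nhdsWithin,
    (hg t ht).eventually ((hy t ht).eventually_lt_add hs hε),
    (hg t ht).eventually ((hy t ht).eventually_sub_lt hs hε)] with t' ht' hup hlow
  rw [Real.dist_eq, abs_sub_lt_iff]
  constructor <;> linarith [hup _ (hy t' ht'), hlow _ (hy t' ht')]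

theorem existsUnique_fixedPoint_of_antitoneOn {Φ : ℝ → ℝ} {a b : ℝ} (hab : a ≤ b)
    (hcont : ContinuousOn Φ (Icc a b)) (hanti : AntitoneOn Φ (Icc a b))
    (ha : a ≤ Φ a) (hb : Φ b ≤ b) : ∃! G, G ∈ Icc a b ∧ Φ G = G := by
  obtain ⟨G, hG, hfix⟩ := intermediate_value_Icc' hab (hcont.sub continuousOn_id)
    (show (0 : ℝ) ∈ Icc (Φ b - b) (Φ a - a) from ⟨by linarith, by linarith⟩)
  have hfix : Φ G = G := sub_eq_zero.1 hfix
  refine ⟨G, ⟨hG, hfix⟩, fun G' ⟨hG', hfix'⟩ => ?_⟩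
  rcases le_total G G' with hle | hle
  · linarith [hanti hG hG' hle]
  · linarith [hanti hG' hG hle]

theorem stmt_7_general {Θ : Type*} [MeasurableSpace Θ] (μ : Measure Θ) [IsFiniteMeasure μ]
    (d D : ℝ) (hd : 0 < d) (hD : D = d * (μ Set.univ).toReal)
    (h : ℝ → ℝ)
    (hhcont : ContinuousOn h (Icc 0 D)) (hhmono : StrictMonoOn h (Icc 0 D))
    (c : Θ → ℝ → ℝ)
    (hc'mono : ∀ θ, StrictMonoOn (deriv (c θ)) (Icc 0 d))
    (r : ℝ)
    (x : Θ → ℝ → ℝ)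
    (hxmeas : ∀ G, Measurable fun θ => x θ G)
    (hx : ∀ θ, ∀ G ∈ Icc (0:ℝ) D,
      (r - h G ≤ deriv (c θ) 0 → x θ G = 0) ∧
      (deriv (c θ) d ≤ r - h G → x θ G = d) ∧
      (deriv (c θ) 0 < r - h G → r - h G < deriv (c θ) d →
        x θ G ∈ Ioo 0 d ∧ deriv (c θ) (x θ G) = r - h G)) :
    ∃! G, G ∈ Icc (0:ℝ) D ∧ (∫ θ, x θ G ∂μ) = G := by
  have hD0 : 0 ≤ D := hD ▸ by positivity
  have hDmem : D ∈ Icc 0 D := right_mem_Icc.2 hD0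
  have hcross : ∀ θ, ∀ G ∈ Icc 0 D,
      IsLevelCrossing (deriv (c θ)) (Icc 0 d) (r - h G) (x θ G) := fun θ G hG =>
    .of_clamp hd.le (hc'mono θ) (hx θ G hG).1 (hx θ G hG).2.1 (hx θ G hG).2.2
  have hbound : ∀ G ∈ Icc 0 D, ∀ᵐ θ ∂μ, ‖x θ G‖ ≤ d := fun G hG => ae_of_all _ fun θ =>
    abs_le.2 ⟨by linarith [(hcross θ G hG).1.1], (hcross θ G hG).1.2⟩
  have hint : ∀ G ∈ Icc 0 D, Integrable (fun θ => x θ G) μ := fun G hG =>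
    (integrable_const d).mono' (hxmeas G).aestronglyMeasurable (hbound G hG)
  have hanti : ∀ θ, AntitoneOn (x θ) (Icc 0 D) := fun θ G₁ hG₁ G₂ hG₂ hle =>
    (hcross θ G₂ hG₂).le_of_le ordConnected_Icc (hcross θ G₁ hG₁)
      (by linarith [hhmono.monotoneOn hG₁ hG₂ hle])
  have hcont : ∀ θ, ContinuousOn (x θ) (Icc 0 D) := fun θ =>
    continuousOn_of_isLevelCrossing ordConnected_Icc (continuousOn_const.sub hhcont) (hcross θ)
  apply existsUnique_fixedPoint_of_antitoneOn hD0
  · exact continuousOn_of_dominated (fun G _ => (hxmeas G).aestronglyMeasurable) hbound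
      (integrable_const d) (ae_of_all _ hcont)
  · exact fun G₁ hG₁ G₂ hG₂ hle =>
      integral_mono (hint G₂ hG₂) (hint G₁ hG₁) fun θ => hanti θ hG₁ hG₂ hle
  · exact integral_nonneg fun θ => (hcross θ 0 (left_mem_Icc.2 hD0)).1.1
  · calc ∫ θ, x θ D ∂μ ≤ ∫ _, d ∂μ :=
          integral_mono (hint D hDmem) (integrable_const d) fun θ => (hcross θ D hDmem).1.2
      _ = D := by rw [integral_const, smul_eq_mul, measureReal_def, hD, mul_comm]

/-- time-of-day pricing equilibrium. Under the same assumptions as the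
fixed-budget case but with constant unit reward `r ≥ 0` — the per-type best response
`x θ G` is the clamp of `(c'_θ)⁻¹(r - h G)` to `[0,d]` — the fixed-point equation
`∫ x θ G dμ = G` has exactly one solution `G ∈ [0,D]`. -/
theorem stmt_7 {Θ : Type*} [MeasurableSpace Θ] (μ : Measure Θ) [IsFiniteMeasure μ]
    (d D : ℝ) (hd : 0 < d) (hD : D = d * (μ Set.univ).toReal)
    (h : ℝ → ℝ)
    (hhcont : ContinuousOn h (Icc 0 D)) (hhmono : StrictMonoOn h (Icc 0 D))
    (c : Θ → ℝ → ℝ)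
    (hcdiff : ∀ θ, DifferentiableOn ℝ (c θ) (Icc 0 d))
    (hc'cont : ∀ θ, ContinuousOn (deriv (c θ)) (Icc 0 d))
    (hc'mono : ∀ θ, StrictMonoOn (deriv (c θ)) (Icc 0 d))
    (Cb : ℝ) (hCb : ∀ θ, deriv (c θ) d ≤ Cb)
    (r : ℝ) (hr : 0 ≤ r)
    (x : Θ → ℝ → ℝ)
    (hxmeas : ∀ G, Measurable fun θ => x θ G)
    (hx : ∀ θ, ∀ G ∈ Icc (0:ℝ) D,
      (r - h G ≤ deriv (c θ) 0 → x θ G = 0) ∧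
      (deriv (c θ) d ≤ r - h G → x θ G = d) ∧
      (deriv (c θ) 0 < r - h G → r - h G < deriv (c θ) d →
        x θ G ∈ Ioo 0 d ∧ deriv (c θ) (x θ G) = r - h G)) :
    ∃! G, G ∈ Icc (0:ℝ) D ∧ (∫ θ, x θ G ∂μ) = G :=
  stmt_7_general μ d D hd hD h hhcont hhmono c hc'mono r x hxmeas hx
end

section
/- Implementation of the social optimum by the fixed-budget rebate: suppose G* ∈ (0,D) is the socially optimal aggregate, characterized by the first-order conditions with pseudo-reward r_SO(G) = h'(G)(D - G). If the fixed-budget parameter is set to R* = G*·h'(G*)·(D - G*), then G* solves the equilibrium fixed-point equation of the fixed-budget rebate game (with unit reward R*/G), i.e., the unique fixed-budget equilibrium level of public good equals G*. -/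
open Set MeasureTheory

/-- implementation of the social optimum by the fixed-budget rebate.
If `G* ∈ (0,D)` is the socially optimal aggregate, characterized by the first-order
conditions with pseudo-reward `r_SO(G) = h'(G)(D-G)`, and the fixed-budget parameter
is `R* = G*·h'(G*)·(D-G*)`, then `G*` solves the equilibrium fixed-point equation of
the fixed-budget rebate game (whose unit reward is `R*/G`): the aggregate of the
per-type best responses at `G*` equals `G*` (and they coincide a.e. with `x*`). -/
theorem stmt_10 {Θ : Type*} [MeasurableSpace Θ] (μ : Measure Θ) [IsFiniteMeasure μ]
    (d D : ℝ) (hd : 0 < d) (hD : D = d * (μ Set.univ).toReal)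
    (h : ℝ → ℝ)
    (hh1 : DifferentiableOn ℝ h (Icc 0 D))
    (hhmono : StrictMonoOn h (Icc 0 D))
    (hhconc : StrictConcaveOn ℝ (Icc 0 D) h)
    (c : Θ → ℝ → ℝ)
    (hcdiff : ∀ θ, DifferentiableOn ℝ (c θ) (Icc 0 d))
    (hc'mono : ∀ θ, StrictMonoOn (deriv (c θ)) (Icc 0 d))
    (Cb : ℝ) (hCb : ∀ θ, deriv (c θ) d ≤ Cb)
    (xs : Θ → ℝ) (hxsmeas : Measurable xs)
    (Gs : ℝ) (hGsIoo : Gs ∈ Ioo (0:ℝ) D) (hGs : Gs = ∫ θ, xs θ ∂μ)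
    -- first-order conditions characterizing the social optimum, with
    -- pseudo-reward r_SO(G*) = h'(G*)(D - G*):
    (hFOC : ∀ᵐ θ ∂μ, xs θ ∈ Icc (0:ℝ) d ∧
      (xs θ = 0 → deriv h Gs * (D - Gs) - h Gs ≤ deriv (c θ) 0) ∧
      (xs θ = d → deriv (c θ) d ≤ deriv h Gs * (D - Gs) - h Gs) ∧
      (xs θ ∈ Ioo (0:ℝ) d → deriv (c θ) (xs θ) = deriv h Gs * (D - Gs) - h Gs))
    (Rstar : ℝ) (hRstar : Rstar = Gs * deriv h Gs * (D - Gs))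
    -- per-type best response of the fixed-budget rebate game at G = G*:
    (xR : Θ → ℝ) (hxRmeas : Measurable xR)
    (hxR : ∀ θ,
      (Rstar / Gs - h Gs ≤ deriv (c θ) 0 → xR θ = 0) ∧
      (deriv (c θ) d ≤ Rstar / Gs - h Gs → xR θ = d) ∧
      (deriv (c θ) 0 < Rstar / Gs - h Gs → Rstar / Gs - h Gs < deriv (c θ) d →
        xR θ ∈ Ioo (0:ℝ) d ∧ deriv (c θ) (xR θ) = Rstar / Gs - h Gs)) :
    (∫ θ, xR θ ∂μ) = Gs ∧ xR =ᵐ[μ] xs := by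
  have hGs0 : Gs ≠ 0 := ne_of_gt hGsIoo.1
  have hr : Rstar / Gs = deriv h Gs * (D - Gs) := by
    rw [hRstar]; field_simp
  have hae : xR =ᵐ[μ] xs := by
    filter_upwards [hFOC] with θ ⟨hmem, h0, hdcase, hint⟩
    rcases eq_or_ne (xs θ) 0 with h00 | hne0
    · rw [(hxR θ).1 (by rw [hr]; linarith [h0 h00]), h00]
    rcases eq_or_ne (xs θ) d with hdd | hned
    · rw [(hxR θ).2.1 (by rw [hr]; linarith [hdcase hdd]), hdd]
    have hIoo : xs θ ∈ Ioo (0:ℝ) d :=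
      ⟨lt_of_le_of_ne hmem.1 (Ne.symm hne0), lt_of_le_of_ne hmem.2 hned⟩
    have heq := hint hIoo
    have hlt1 : deriv (c θ) 0 < deriv (c θ) (xs θ) :=
      (hc'mono θ) (left_mem_Icc.mpr hd.le) ⟨hIoo.1.le, hIoo.2.le⟩ hIoo.1
    have hlt2 : deriv (c θ) (xs θ) < deriv (c θ) d :=
      (hc'mono θ) ⟨hIoo.1.le, hIoo.2.le⟩ (right_mem_Icc.mpr hd.le) hIoo.2
    obtain ⟨hmemR, heqR⟩ := (hxR θ).2.2 (by rw [hr]; linarith) (by rw [hr]; linarith)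
    have : deriv (c θ) (xR θ) = deriv (c θ) (xs θ) := by rw [heqR, heq, hr]
    exact (hc'mono θ).injOn ⟨hmemR.1.le, hmemR.2.le⟩ ⟨hIoo.1.le, hIoo.2.le⟩ this
  exact ⟨by rw [integral_congr_ae hae, ← hGs], hae⟩
end

section
/- Implementation of the social optimum by time-of-day pricing: under the same assumptions, if the constant unit reward is set to r* = h'(G*)(D - G*), then the unique Nash equilibrium of the time-of-day pricing game has aggregate public good level equal to G*, and the equilibrium contribution function equals the socially optimal x* μ-almost-everywhere. -/
open Set MeasureTheory

/-- implementation of the social optimum by time-of-day pricing.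
With constant unit reward `r* = h'(G*)(D-G*)`, the unique Nash equilibrium of the
time-of-day pricing game has aggregate public good level `G*`, and the equilibrium
contribution function equals the socially optimal `x*` μ-almost-everywhere. -/
theorem stmt_11 {Θ : Type*} [MeasurableSpace Θ] (μ : Measure Θ) [IsFiniteMeasure μ]
    (d D : ℝ) (hd : 0 < d) (hD : D = d * (μ Set.univ).toReal)
    (h : ℝ → ℝ)
    (hh1 : DifferentiableOn ℝ h (Icc 0 D))
    (hhmono : StrictMonoOn h (Icc 0 D))
    (hhconc : StrictConcaveOn ℝ (Icc 0 D) h)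
    (c : Θ → ℝ → ℝ)
    (hcdiff : ∀ θ, DifferentiableOn ℝ (c θ) (Icc 0 d))
    (hc'mono : ∀ θ, StrictMonoOn (deriv (c θ)) (Icc 0 d))
    (Cb : ℝ) (hCb : ∀ θ, deriv (c θ) d ≤ Cb)
    (xs : Θ → ℝ) (hxsmeas : Measurable xs)
    (Gs : ℝ) (hGsIoo : Gs ∈ Ioo (0:ℝ) D) (hGs : Gs = ∫ θ, xs θ ∂μ)
    -- first-order conditions characterizing the social optimum:
    (hFOC : ∀ᵐ θ ∂μ, xs θ ∈ Icc (0:ℝ) d ∧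
      (xs θ = 0 → deriv h Gs * (D - Gs) - h Gs ≤ deriv (c θ) 0) ∧
      (xs θ = d → deriv (c θ) d ≤ deriv h Gs * (D - Gs) - h Gs) ∧
      (xs θ ∈ Ioo (0:ℝ) d → deriv (c θ) (xs θ) = deriv h Gs * (D - Gs) - h Gs))
    (rstar : ℝ) (hrstar : rstar = deriv h Gs * (D - Gs))
    -- per-type best response of the time-of-day pricing game with reward r*:
    (xresp : Θ → ℝ → ℝ) (hxrespmeas : ∀ G, Measurable fun θ => xresp θ G)
    (hxresp : ∀ θ, ∀ G ∈ Icc (0:ℝ) D,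
      (rstar - h G ≤ deriv (c θ) 0 → xresp θ G = 0) ∧
      (deriv (c θ) d ≤ rstar - h G → xresp θ G = d) ∧
      (deriv (c θ) 0 < rstar - h G → rstar - h G < deriv (c θ) d →
        xresp θ G ∈ Ioo (0:ℝ) d ∧ deriv (c θ) (xresp θ G) = rstar - h G))
    -- (Geq, xeq) is a Nash equilibrium: xeq is the best response to Geq and
    -- Geq is the aggregate of the contributions:
    (Geq : ℝ) (hGeqIcc : Geq ∈ Icc (0:ℝ) D)
    (xeq : Θ → ℝ) (hxeq : ∀ θ, xeq θ = xresp θ Geq)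
    (hfix : (∫ θ, xeq θ ∂μ) = Geq) :
    Geq = Gs ∧ xeq =ᵐ[μ] xs := by
  have hGsIcc : Gs ∈ Icc (0:ℝ) D := ⟨hGsIoo.1.le, hGsIoo.2.le⟩
  have hc0d : ∀ θ, deriv (c θ) 0 < deriv (c θ) d := fun θ =>
    hc'mono θ ⟨le_rfl, hd.le⟩ ⟨hd.le, le_rfl⟩ hd
  set m : ℝ := rstar - h Gs with hm
  have hmdef : deriv h Gs * (D - Gs) - h Gs = m := by rw [hm, hrstar]
  -- range of the best response at Geq
  have hrange : ∀ θ, xresp θ Geq ∈ Icc (0:ℝ) d := by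
    intro θ
    obtain ⟨h1, h2, h3⟩ := hxresp θ Geq hGeqIcc
    rcases le_or_gt (rstar - h Geq) (deriv (c θ) 0) with hle | hlt
    · rw [h1 hle]; exact ⟨le_rfl, hd.le⟩
    · rcases le_or_gt (deriv (c θ) d) (rstar - h Geq) with hle2 | hlt2
      · rw [h2 hle2]; exact ⟨hd.le, le_rfl⟩
      · exact ⟨(h3 hlt hlt2).1.1.le, (h3 hlt hlt2).1.2.le⟩
  -- key pointwise comparison
  have key : ∀ θ, xs θ ∈ Icc (0:ℝ) d →
      (xs θ = 0 → m ≤ deriv (c θ) 0) →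
      (xs θ = d → deriv (c θ) d ≤ m) →
      (xs θ ∈ Ioo (0:ℝ) d → deriv (c θ) (xs θ) = m) →
      ((rstar - h Geq ≤ m → xresp θ Geq ≤ xs θ) ∧
       (m ≤ rstar - h Geq → xs θ ≤ xresp θ Geq)) := by
    intro θ hIcc f0 fd fint
    obtain ⟨h1, h2, h3⟩ := hxresp θ Geq hGeqIcc
    constructor
    · intro hle
      rcases le_or_gt (rstar - h Geq) (deriv (c θ) 0) with hle0 | hlt0
      · rw [h1 hle0]; exact hIcc.1
      · rcases le_or_gt (deriv (c θ) d) (rstar - h Geq) with hled | hltd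
        · -- then xs θ = d
          rcases eq_or_lt_of_le hIcc.2 with heq | hltxs
          · rw [h2 hled, heq]
          · rcases eq_or_lt_of_le hIcc.1 with heq0 | hlt0'
            · have := f0 heq0.symm
              have := hc0d θ
              linarith
            · have := fint ⟨hlt0', hltxs⟩
              have hcc : deriv (c θ) (xs θ) < deriv (c θ) d :=
                hc'mono θ ⟨hIcc.1, hIcc.2⟩ ⟨hd.le, le_rfl⟩ hltxs
              linarith
        · obtain ⟨hmemI, heqc⟩ := h3 hlt0 hltd
          rcases eq_or_lt_of_le hIcc.2 with heq | hltxs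
          · rw [heq]; exact hmemI.2.le
          · rcases eq_or_lt_of_le hIcc.1 with heq0 | hlt0'
            · have := f0 heq0.symm; linarith
            · have hcx := fint ⟨hlt0', hltxs⟩
              have : deriv (c θ) (xresp θ Geq) ≤ deriv (c θ) (xs θ) := by
                rw [heqc, hcx]; linarith
              exact ((hc'mono θ).le_iff_le ⟨hmemI.1.le, hmemI.2.le⟩ hIcc).mp this
    · intro hge
      rcases le_or_gt (deriv (c θ) d) (rstar - h Geq) with hled | hltd
      · rw [h2 hled]; exact hIcc.2
      · rcases le_or_gt (rstar - h Geq) (deriv (c θ) 0) with hle0 | hlt0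
        · -- then xs θ = 0
          rcases eq_or_lt_of_le hIcc.1 with heq0 | hlt0'
          · rw [h1 hle0, ← heq0]
          · rcases eq_or_lt_of_le hIcc.2 with heq | hltxs
            · have := fd heq; linarith
            · have hcx := fint ⟨hlt0', hltxs⟩
              have hcc : deriv (c θ) 0 < deriv (c θ) (xs θ) :=
                hc'mono θ ⟨le_rfl, hd.le⟩ hIcc hlt0'
              linarith
        · obtain ⟨hmemI, heqc⟩ := h3 hlt0 hltd
          rcases eq_or_lt_of_le hIcc.1 with heq0 | hlt0'
          · rw [← heq0]; exact hmemI.1.le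
          · rcases eq_or_lt_of_le hIcc.2 with heq | hltxs
            · have := fd heq; linarith
            · have hcx := fint ⟨hlt0', hltxs⟩
              have : deriv (c θ) (xs θ) ≤ deriv (c θ) (xresp θ Geq) := by
                rw [heqc, hcx]; linarith
              exact ((hc'mono θ).le_iff_le hIcc ⟨hmemI.1.le, hmemI.2.le⟩).mp this
  -- integrability
  have hxs_int : Integrable xs μ := by
    refine ⟨hxsmeas.aestronglyMeasurable, ?_⟩
    apply HasFiniteIntegral.of_bounded (C := d)
    filter_upwards [hFOC] with θ hθ
    rw [Real.norm_eq_abs, abs_le]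
    exact ⟨by linarith [hθ.1.1], hθ.1.2⟩
  have hxeq_int : Integrable xeq μ := by
    have hmeq : xeq = fun θ => xresp θ Geq := funext hxeq
    refine ⟨(hmeq ▸ (hxrespmeas Geq)).aestronglyMeasurable, ?_⟩
    apply HasFiniteIntegral.of_bounded (C := d)
    filter_upwards with θ
    rw [hxeq θ, Real.norm_eq_abs, abs_le]
    exact ⟨by linarith [(hrange θ).1], (hrange θ).2⟩
  -- Geq = Gs
  have hGG : Geq = Gs := by
    by_contra hne
    rcases lt_or_gt_of_ne hne with hlt | hgt
    · -- Geq < Gs : m ≤ rstar - h Geq, so xs ≤ xeq a.e.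
      have hhlt : h Geq < h Gs := hhmono hGeqIcc hGsIcc hlt
      have hle : ∀ᵐ θ ∂μ, xs θ ≤ xeq θ := by
        filter_upwards [hFOC] with θ ⟨hIcc, f0, fd, fint⟩
        rw [hxeq θ]
        exact ((key θ hIcc (fun e => hmdef ▸ f0 e) (fun e => hmdef ▸ fd e)
          (fun e => hmdef ▸ fint e)).2) (by rw [hm]; linarith)
      have := integral_mono_ae hxs_int hxeq_int hle
      rw [← hGs, hfix] at this
      linarith
    · have hhlt : h Gs < h Geq := hhmono hGsIcc hGeqIcc hgt
      have hle : ∀ᵐ θ ∂μ, xeq θ ≤ xs θ := by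
        filter_upwards [hFOC] with θ ⟨hIcc, f0, fd, fint⟩
        rw [hxeq θ]
        exact ((key θ hIcc (fun e => hmdef ▸ f0 e) (fun e => hmdef ▸ fd e)
          (fun e => hmdef ▸ fint e)).1) (by rw [hm]; linarith)
      have := integral_mono_ae hxeq_int hxs_int hle
      rw [← hGs, hfix] at this
      linarith
  refine ⟨hGG, ?_⟩
  filter_upwards [hFOC] with θ ⟨hIcc, f0, fd, fint⟩
  have hk := key θ hIcc (fun e => hmdef ▸ f0 e) (fun e => hmdef ▸ fd e)
    (fun e => hmdef ▸ fint e)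
  have hEq : rstar - h Geq = m := by rw [hm, hGG]
  rw [hxeq θ]
  exact le_antisymm (hk.1 hEq.le) (hk.2 hEq.ge)
end

section
/- Monotonicity of the per-type equilibrium contribution: in the fixed-budget rebate game, if R' > R then x_eq_θ(R') ≥ x_eq_θ(R) for all θ, with strict inequality whenever 0 < x_eq_θ(R) < d. -/
open Set MeasureTheory

lemma resp_compare (d : ℝ) (hd : 0 < d) (f : ℝ → ℝ) (hf : StrictMonoOn f (Icc 0 d))
    (s s' x x' : ℝ) (hss : s < s')
    (hx : (s ≤ f 0 → x = 0) ∧ (f d ≤ s → x = d) ∧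
      (f 0 < s → s < f d → x ∈ Ioo 0 d ∧ f x = s))
    (hx' : (s' ≤ f 0 → x' = 0) ∧ (f d ≤ s' → x' = d) ∧
      (f 0 < s' → s' < f d → x' ∈ Ioo 0 d ∧ f x' = s')) :
    x ≤ x' ∧ (0 < x → x < d → x < x') := by
  obtain ⟨h0, hdd, hio⟩ := hx
  obtain ⟨h0', hdd', hio'⟩ := hx'
  have hx'bounds : 0 ≤ x' ∧ x' ≤ d := by
    rcases le_or_gt s' (f 0) with hc | hc
    · simp [h0' hc, le_of_lt hd]
    rcases le_or_gt (f d) s' with hc2 | hc2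
    · simp [hdd' hc2, le_of_lt hd]
    · obtain ⟨⟨a, b⟩, _⟩ := hio' hc hc2
      exact ⟨le_of_lt a, le_of_lt b⟩
  rcases le_or_gt s (f 0) with hc | hc
  · have hx0 := h0 hc
    exact ⟨hx0 ▸ hx'bounds.1, fun hp _ => absurd hp (by simp [hx0])⟩
  rcases le_or_gt (f d) s with hc2 | hc2
  · have hxd := hdd hc2
    have : x' = d := hdd' (hc2.trans hss.le)
    exact ⟨le_of_eq (hxd.trans this.symm), fun _ hq => absurd hq (by simp [hxd])⟩
  · obtain ⟨hxIoo, hfx⟩ := hio hc hc2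
    have key : x < x' := by
      rcases le_or_gt (f d) s' with hc3 | hc3
      · rw [hdd' hc3]; exact hxIoo.2
      · obtain ⟨hx'Ioo, hfx'⟩ := hio' (hc.trans hss) hc3
        have := (hf.lt_iff_lt (Ioo_subset_Icc_self hxIoo) (Ioo_subset_Icc_self hx'Ioo)).mp
          (by rw [hfx, hfx']; exact hss)
        exact this
    exact ⟨key.le, fun _ _ => key⟩

lemma resp_bounds (d : ℝ) (hd : 0 < d) (f : ℝ → ℝ) (s x : ℝ)
    (hx : (s ≤ f 0 → x = 0) ∧ (f d ≤ s → x = d) ∧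
      (f 0 < s → s < f d → x ∈ Ioo 0 d ∧ f x = s)) :
    0 ≤ x ∧ x ≤ d := by
  obtain ⟨h0, hdd, hio⟩ := hx
  rcases le_or_gt s (f 0) with hc | hc
  · simp [h0 hc, hd.le]
  rcases le_or_gt (f d) s with hc2 | hc2
  · simp [hdd hc2, hd.le]
  · obtain ⟨⟨a, b⟩, _⟩ := hio hc hc2
    exact ⟨a.le, b.le⟩

lemma resp_mono_weak (d : ℝ) (hd : 0 < d) (f : ℝ → ℝ) (hf : StrictMonoOn f (Icc 0 d))
    (s s' x x' : ℝ) (hss : s ≤ s')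
    (hx : (s ≤ f 0 → x = 0) ∧ (f d ≤ s → x = d) ∧
      (f 0 < s → s < f d → x ∈ Ioo 0 d ∧ f x = s))
    (hx' : (s' ≤ f 0 → x' = 0) ∧ (f d ≤ s' → x' = d) ∧
      (f 0 < s' → s' < f d → x' ∈ Ioo 0 d ∧ f x' = s')) :
    x ≤ x' := by
  have hxb := resp_bounds d hd f s x hx
  have hx'b := resp_bounds d hd f s' x' hx'
  obtain ⟨h0, hdd, hio⟩ := hx
  obtain ⟨h0', hdd', hio'⟩ := hx'
  rcases le_or_gt s (f 0) with hc | hc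
  · rw [h0 hc]; exact hx'b.1
  rcases le_or_gt (f d) s' with hc3 | hc3
  · rw [hdd' hc3]; exact hxb.2
  have hc2 : s < f d := lt_of_le_of_lt hss hc3
  obtain ⟨hxIoo, hfx⟩ := hio hc hc2
  obtain ⟨hx'Ioo, hfx'⟩ := hio' (lt_of_lt_of_le hc hss) hc3
  exact (hf.le_iff_le (Ioo_subset_Icc_self hxIoo) (Ioo_subset_Icc_self hx'Ioo)).mp
    (by rw [hfx, hfx']; exact hss)


/-- monotonicity of the per-type equilibrium contribution in the
fixed-budget rebate game. `x_eq θ R` is the clamp of `(c'_θ)⁻¹(R/G_eq(R) - h(G_eq(R)))`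
to `[0,d]`, where `G_eq(R)` is the (positive) equilibrium aggregate. If `R' > R ≥ 0`,
then `x_eq θ R' ≥ x_eq θ R` for all `θ`, strictly whenever `0 < x_eq θ R < d`. -/
theorem stmt_13 {Θ : Type*} [MeasurableSpace Θ] (μ : Measure Θ) [IsFiniteMeasure μ]
    (d D : ℝ) (hd : 0 < d) (hD : D = d * (μ Set.univ).toReal)
    (h : ℝ → ℝ) (hhmono : StrictMonoOn h (Icc 0 D))
    (c : Θ → ℝ → ℝ)
    (hcdiff : ∀ θ, DifferentiableOn ℝ (c θ) (Icc 0 d))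
    (hc'mono : ∀ θ, StrictMonoOn (deriv (c θ)) (Icc 0 d))
    -- the per-type best response (clamp of (c'_θ)⁻¹(R/G - h G) to [0,d]):
    (xresp : Θ → ℝ → ℝ → ℝ)
    (hxrespmeas : ∀ R G, Measurable fun θ => xresp θ R G)
    (hxresp : ∀ θ, ∀ R, 0 ≤ R → ∀ G ∈ Ioc (0:ℝ) D,
      (R / G - h G ≤ deriv (c θ) 0 → xresp θ R G = 0) ∧
      (deriv (c θ) d ≤ R / G - h G → xresp θ R G = d) ∧
      (deriv (c θ) 0 < R / G - h G → R / G - h G < deriv (c θ) d →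
        xresp θ R G ∈ Ioo (0:ℝ) d ∧ deriv (c θ) (xresp θ R G) = R / G - h G))
    -- equilibrium: G_eq(R) is a positive fixed point of the aggregate best response:
    (Geq : ℝ → ℝ) (xeq : Θ → ℝ → ℝ)
    (hGeq : ∀ R, 0 ≤ R → Geq R ∈ Ioc (0:ℝ) D ∧
      (∫ θ, xresp θ R (Geq R) ∂μ) = Geq R)
    (hxeq : ∀ θ R, xeq θ R = xresp θ R (Geq R)) :
    ∀ R R', 0 ≤ R → R < R' → ∀ θ,
      xeq θ R ≤ xeq θ R' ∧ (0 < xeq θ R → xeq θ R < d → xeq θ R < xeq θ R') := by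
  intro R R' hR hRR'
  have hR' : 0 ≤ R' := hR.trans hRR'.le
  obtain ⟨hGmem, hGfix⟩ := hGeq R hR
  obtain ⟨hG'mem, hG'fix⟩ := hGeq R' hR'
  have key : R / Geq R - h (Geq R) < R' / Geq R' - h (Geq R') := by
    by_contra hns
    push_neg at hns
    have hle : ∀ θ, xresp θ R' (Geq R') ≤ xresp θ R (Geq R) := fun θ =>
      resp_mono_weak d hd (deriv (c θ)) (hc'mono θ) _ _ _ _ hns
        (hxresp θ R' hR' _ hG'mem) (hxresp θ R hR _ hGmem)
    have hint : ∀ (Rv Gv : ℝ), 0 ≤ Rv → Gv ∈ Ioc (0:ℝ) D →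
        Integrable (fun θ => xresp θ Rv Gv) μ := by
      intro Rv Gv hRv hGv
      apply Integrable.mono' (integrable_const d) ((hxrespmeas Rv Gv).aestronglyMeasurable)
      filter_upwards with θ
      have hb := resp_bounds d hd (deriv (c θ)) _ _ (hxresp θ Rv hRv Gv hGv)
      rw [Real.norm_eq_abs, abs_le]
      exact ⟨by linarith [hb.1, hd], hb.2⟩
    have hGG : Geq R' ≤ Geq R := by
      rw [← hGfix, ← hG'fix]
      exact integral_mono (hint R' _ hR' hG'mem) (hint R _ hR hGmem) hle
    have hG'pos := hG'mem.1
    have hGpos := hGmem.1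
    have h1 : R / Geq R < R' / Geq R := (div_lt_div_iff_of_pos_right hGpos).mpr hRR'
    have h2 : R' / Geq R ≤ R' / Geq R' := by
      apply div_le_div_of_nonneg_left hR' hG'pos hGG
    have h3 : h (Geq R') ≤ h (Geq R) :=
      hhmono.monotoneOn (Ioc_subset_Icc_self hG'mem) (Ioc_subset_Icc_self hGmem) hGG
    linarith
  intro θ
  rw [hxeq θ R, hxeq θ R']
  exact resp_compare d hd (deriv (c θ)) (hc'mono θ) _ _ _ _ key
    (hxresp θ R hR _ hGmem) (hxresp θ R' hR' _ hG'mem)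
end

section
/- Saturation for large rewards: under assumption sup_θ c'_θ(d) < ∞ and h bounded on [0,D], there exists R̄ such that for all R ≥ R̄, the fixed-budget rebate equilibrium satisfies x_eq_θ(R) = d for all θ and G_eq(R) = D. Analogously, there exists r̄ such that for all r ≥ r̄ the time-of-day equilibrium is x_eq_θ(r) = d for all θ and G_eq(r) = D. -/
open Set MeasureTheory

/-! Once the effective price `p` (here `R / G - h G`, resp. `r - h G`) evaluated at `G = D`
exceeds every marginal cost `c'_θ(d)`, the constant profile `d` satisfies the first-order
conditions: the corner `y θ = 0` and the interior case are excluded because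
`c'_θ(0) < c'_θ(d) ≤ p`. Since this profile integrates to `D`, uniqueness of the equilibrium
forces full contribution. With `h ≤ Hb` on `[0, D]` and `c'_θ(d) ≤ Cb`, the thresholds
`R̄ = D (Cb + Hb)` and `r̄ = Cb + Hb` suffice (raised to `0`, since rewards are nonnegative). -/

theorem foc_const_of_marginal_le {Θ : Type*} (m : Θ → ℝ → ℝ) {d p : ℝ} (hlt : ∀ θ, m θ 0 < m θ d)
    (hp : ∀ θ, m θ d ≤ p) (θ : Θ) :
    (p ≤ m θ 0 → d = 0) ∧ (m θ d ≤ p → d = d) ∧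
      (m θ 0 < p → p < m θ d → d ∈ Ioo 0 d ∧ m θ d = p) :=
  ⟨fun h0 => ((hp θ).trans_lt (h0.trans_lt (hlt θ))).false.elim, fun _ => rfl,
    fun _ hpd => ((hp θ).trans_lt hpd).false.elim⟩

theorem stmt_14_general {Θ : Type*} [MeasurableSpace Θ] (μ : Measure Θ)
    (d D : ℝ) (hd : 0 < d) (hμ : 0 < (μ Set.univ).toReal)
    (hD : D = d * (μ Set.univ).toReal)
    (h : ℝ → ℝ) (Hb : ℝ) (hhb : ∀ G ∈ Icc (0:ℝ) D, |h G| ≤ Hb)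
    (c : Θ → ℝ → ℝ)
    (hc'mono : ∀ θ, StrictMonoOn (deriv (c θ)) (Icc 0 d))
    (Cb : ℝ) (hCb : ∀ θ, deriv (c θ) d ≤ Cb)
    (GeqR : ℝ → ℝ) (xeqR : Θ → ℝ → ℝ)
    -- any (G, y) satisfying the equilibrium conditions of the fixed-budget rebate
    -- game with parameter R is the (unique) equilibrium (G_eq(R), x_eq(·, R)):
    (hcharR : ∀ R, 0 ≤ R → ∀ G ∈ Ioc (0:ℝ) D, ∀ y : Θ → ℝ,
      (∀ θ, y θ ∈ Icc (0:ℝ) d) → (∫ θ, y θ ∂μ) = G →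
      (∀ θ, (R / G - h G ≤ deriv (c θ) 0 → y θ = 0) ∧
            (deriv (c θ) d ≤ R / G - h G → y θ = d) ∧
            (deriv (c θ) 0 < R / G - h G → R / G - h G < deriv (c θ) d →
              y θ ∈ Ioo (0:ℝ) d ∧ deriv (c θ) (y θ) = R / G - h G)) →
      GeqR R = G ∧ ∀ θ, xeqR θ R = y θ)
    (GeqT : ℝ → ℝ) (xeqT : Θ → ℝ → ℝ)
    -- same characterization for the time-of-day pricing game with reward r:
    (hcharT : ∀ r, 0 ≤ r → ∀ G ∈ Icc (0:ℝ) D, ∀ y : Θ → ℝ,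
      (∀ θ, y θ ∈ Icc (0:ℝ) d) → (∫ θ, y θ ∂μ) = G →
      (∀ θ, (r - h G ≤ deriv (c θ) 0 → y θ = 0) ∧
            (deriv (c θ) d ≤ r - h G → y θ = d) ∧
            (deriv (c θ) 0 < r - h G → r - h G < deriv (c θ) d →
              y θ ∈ Ioo (0:ℝ) d ∧ deriv (c θ) (y θ) = r - h G)) →
      GeqT r = G ∧ ∀ θ, xeqT θ r = y θ) :
    (∃ Rbar : ℝ, ∀ R, Rbar ≤ R → (∀ θ, xeqR θ R = d) ∧ GeqR R = D) ∧
    (∃ rbar : ℝ, ∀ r, rbar ≤ r → (∀ θ, xeqT θ r = d) ∧ GeqT r = D) := by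
  have hDpos : 0 < D := hD ▸ mul_pos hd hμ
  have hhD : h D ≤ Hb := (le_abs_self _).trans (hhb D ⟨hDpos.le, le_rfl⟩)
  have hmem (θ : Θ) : d ∈ Icc 0 d := ⟨hd.le, le_rfl⟩
  have hint : ∫ _ : Θ, d ∂μ = D := by
    rw [integral_const, smul_eq_mul, hD, mul_comm, measureReal_def]
  have hlt (θ : Θ) : deriv (c θ) 0 < deriv (c θ) d :=
    hc'mono θ ⟨le_rfl, hd.le⟩ ⟨hd.le, le_rfl⟩ hd
  have hsat (p : ℝ) (hp : Cb + Hb ≤ p) (θ : Θ) : deriv (c θ) d ≤ p - h D := by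
    linarith [hCb θ]
  refine ⟨⟨max 0 (D * (Cb + Hb)), fun R hR => ?_⟩, ⟨max 0 (Cb + Hb), fun r hr => ?_⟩⟩
  · have hRD : Cb + Hb ≤ R / D :=
      (le_div_iff₀' hDpos).2 ((le_max_right _ _).trans hR)
    obtain ⟨hG, hx⟩ := hcharR R ((le_max_left _ _).trans hR) D ⟨hDpos, le_rfl⟩ (fun _ => d)
      hmem hint (foc_const_of_marginal_le _ hlt (hsat _ hRD))
    exact ⟨hx, hG⟩
  · obtain ⟨hG, hx⟩ := hcharT r ((le_max_left _ _).trans hr) D ⟨hDpos.le, le_rfl⟩ (fun _ => d)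
      hmem hint (foc_const_of_marginal_le _ hlt (hsat _ ((le_max_right _ _).trans hr)))
    exact ⟨hx, hG⟩

/-- saturation for large rewards. With uniformly bounded marginal costs
(`c'_θ(d) ≤ Cb`) and `h` bounded on `[0,D]`, there is a threshold `R̄` such that for
every `R ≥ R̄` the fixed-budget rebate equilibrium is full contribution:
`x_eq θ R = d` for all `θ` and `G_eq(R) = D`; analogously there is `r̄` for the
time-of-day pricing equilibrium. Equilibria are characterized by the fixed-point/FOC
conditions (hypotheses `hcharR`, `hcharT`). -/
theorem stmt_14 {Θ : Type*} [MeasurableSpace Θ] (μ : Measure Θ) [IsFiniteMeasure μ]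
    (d D : ℝ) (hd : 0 < d) (hμ : 0 < (μ Set.univ).toReal)
    (hD : D = d * (μ Set.univ).toReal)
    (h : ℝ → ℝ) (Hb : ℝ) (hhb : ∀ G ∈ Icc (0:ℝ) D, |h G| ≤ Hb)
    (c : Θ → ℝ → ℝ)
    (hc'mono : ∀ θ, StrictMonoOn (deriv (c θ)) (Icc 0 d))
    (Cb : ℝ) (hCb : ∀ θ, deriv (c θ) d ≤ Cb)
    (GeqR : ℝ → ℝ) (xeqR : Θ → ℝ → ℝ)
    -- any (G, y) satisfying the equilibrium conditions of the fixed-budget rebate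
    -- game with parameter R is the (unique) equilibrium (G_eq(R), x_eq(·, R)):
    (hcharR : ∀ R, 0 ≤ R → ∀ G ∈ Ioc (0:ℝ) D, ∀ y : Θ → ℝ,
      (∀ θ, y θ ∈ Icc (0:ℝ) d) → (∫ θ, y θ ∂μ) = G →
      (∀ θ, (R / G - h G ≤ deriv (c θ) 0 → y θ = 0) ∧
            (deriv (c θ) d ≤ R / G - h G → y θ = d) ∧
            (deriv (c θ) 0 < R / G - h G → R / G - h G < deriv (c θ) d →
              y θ ∈ Ioo (0:ℝ) d ∧ deriv (c θ) (y θ) = R / G - h G)) →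
      GeqR R = G ∧ ∀ θ, xeqR θ R = y θ)
    (GeqT : ℝ → ℝ) (xeqT : Θ → ℝ → ℝ)
    -- same characterization for the time-of-day pricing game with reward r:
    (hcharT : ∀ r, 0 ≤ r → ∀ G ∈ Icc (0:ℝ) D, ∀ y : Θ → ℝ,
      (∀ θ, y θ ∈ Icc (0:ℝ) d) → (∫ θ, y θ ∂μ) = G →
      (∀ θ, (r - h G ≤ deriv (c θ) 0 → y θ = 0) ∧
            (deriv (c θ) d ≤ r - h G → y θ = d) ∧
            (deriv (c θ) 0 < r - h G → r - h G < deriv (c θ) d →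
              y θ ∈ Ioo (0:ℝ) d ∧ deriv (c θ) (y θ) = r - h G)) →
      GeqT r = G ∧ ∀ θ, xeqT θ r = y θ) :
    (∃ Rbar : ℝ, ∀ R, Rbar ≤ R → (∀ θ, xeqR θ R = d) ∧ GeqR R = D) ∧
    (∃ rbar : ℝ, ∀ r, rbar ≤ r → (∀ θ, xeqT θ r = d) ∧ GeqT r = D) :=
  stmt_14_general μ d D hd hμ hD h Hb hhb c hc'mono Cb hCb GeqR xeqR hcharR GeqT xeqT hcharT
end

section
/- Strict positivity of the fixed-budget equilibrium: for any R > 0, the equilibrium aggregate of the fixed-budget rebate game satisfies G_eq(R) > 0. Equivalently, G = 0 is not an equilibrium: since the marginal unit reward R/G tends to +∞ as G → 0⁺, the aggregate best response G_resp(G) stays bounded away from 0 for small G, so the unique fixed point is positive. -/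
open Set

/-- strict positivity of the fixed-budget equilibrium. For `R > 0`,
since the unit reward `R/G` blows up as `G → 0⁺`, the aggregate best response equals
`D` for small positive `G` (everyone saturates once `R/G - h G` exceeds the uniform
marginal-cost bound `Cb`); combined with monotonicity of the aggregate best response,
the fixed point `G_eq` is positive. -/
theorem stmt_15 (D R Cb Hb : ℝ) (hD : 0 < D) (hR : 0 < R)
    (h : ℝ → ℝ) (hhb : ∀ G ∈ Icc (0:ℝ) D, |h G| ≤ Hb)
    (agg : ℝ → ℝ)
    (hmaps : ∀ G ∈ Icc (0:ℝ) D, agg G ∈ Icc 0 D)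
    (hcont : ContinuousOn agg (Icc 0 D))
    (hanti : AntitoneOn agg (Icc 0 D))
    (hsat : ∀ G ∈ Ioc (0:ℝ) D, Cb ≤ R / G - h G → agg G = D)
    (Geq : ℝ) (hGeq : Geq ∈ Icc (0:ℝ) D) (hfix : agg Geq = Geq) :
    0 < Geq := by
  by_contra hle
  push_neg at hle
  have hGeq0 : Geq = 0 := le_antisymm hle hGeq.1
  have hHb : 0 ≤ Hb := (abs_nonneg _).trans (hhb 0 ⟨le_rfl, hD.le⟩)
  set M : ℝ := |Cb| + Hb + 1 with hM
  have hMpos : 0 < M := by positivity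
  set G : ℝ := min D (R / M) with hG
  have hGpos : 0 < G := lt_min hD (div_pos hR hMpos)
  have hGD : G ≤ D := min_le_left _ _
  have hGmem : G ∈ Icc (0:ℝ) D := ⟨hGpos.le, hGD⟩
  have hRG : M ≤ R / G := by
    rw [le_div_iff₀ hGpos]
    calc M * G ≤ M * (R / M) := by
          exact mul_le_mul_of_nonneg_left (min_le_right _ _) hMpos.le
    _ = R := by field_simp
  have hsatG : agg G = D := by
    apply hsat G ⟨hGpos, hGD⟩
    have hhG : h G ≤ Hb := (le_abs_self _).trans (hhb G hGmem)
    have : Cb + h G ≤ M := by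
      have := le_abs_self Cb
      linarith
    linarith
  have : agg G ≤ agg Geq := hanti (hGeq0 ▸ hGeq) hGmem (hGeq0 ▸ hGpos.le)
  rw [hsatG, hfix, hGeq0] at this
  linarith
end
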